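/- arXiv:1603.00113 — 3 statements merged into one kernel-verified Lean document; each statement's English description precedes it below -/
import Mathlib

section
/- Let u = (u_0,…,u_c) have all components strictly positive and let ν ∈ ℕ₀^c satisfy ν_1 + ⋯ + ν_c = n. Then the restriction of V(·,u) to the convex open set 𝒮(ν) is strictly convex. -/
/-!
On `𝒮(ν)` none of the differences `x i - x j` and `x i - q j` changes sign, so each Coulomb
term is the convex function `t ↦ w / |t|` of an affine quantity that stays on one side of `0`;
hence `V(·,u)` is convex there. Strictness comes from the electrode terms: because the blocks
cover all indices, both `x i` and `y i` lie in one gap `(q (k-1), q k)`, on which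
`t ↦ ∑ j, u j / |t - q j|` is strictly convex, and `x ≠ y` differ in some coordinate.
-/

open Finset Filter Topology

/-- The normalized energy function `V(x,u)` of `n` charged particles at positions `x` with
`c+1` electrodes at positions `q` carrying charges `u`. -/
noncomputable def energy (n c : ℕ) (q u : Fin (c + 1) → ℝ) (x : Fin n → ℝ) : ℝ :=
  (1 / 2) * ∑ i : Fin n, ∑ j ∈ Finset.univ \ {i}, 1 / |x i - x j| +
    ∑ i : Fin n, ∑ j : Fin (c + 1), u j / |x i - q j|

/-- The simplified state space `𝒮₀ = {x : q₀ < x₁ < ⋯ < xₙ < q_c}`. -/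
def stateSpace (n c : ℕ) (q : Fin (c + 1) → ℝ) : Set (Fin n → ℝ) :=
  {x | (∀ i j : Fin n, i < j → x i < x j) ∧ ∀ i, q 0 < x i ∧ x i < q (Fin.last c)}

/-- The region of attraction `𝒮(ν)`: the subset of `𝒮₀` where, for each `k`, the consecutive
coordinates with indices in `[ν₁+⋯+ν_{k-1}, ν₁+⋯+ν_k)` lie strictly between `q_{k-1}` and `q_k`. -/
def roa (n c : ℕ) (q : Fin (c + 1) → ℝ) (ν : Fin c → ℕ) : Set (Fin n → ℝ) :=
  {x | x ∈ stateSpace n c q ∧ ∀ k : Fin c, ∀ m : Fin n,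
    (∑ j ∈ Finset.Iio k, ν j) ≤ (m : ℕ) → (m : ℕ) < (∑ j ∈ Finset.Iio k, ν j) + ν k →
    q k.castSucc < x m ∧ x m < q k.succ}

/-- The set of points whose coordinates are pairwise distinct and distinct from all
electrode positions. -/
def goodSet (n c : ℕ) (q : Fin (c + 1) → ℝ) : Set (Fin n → ℝ) :=
  {x | (∀ i j : Fin n, i ≠ j → x i ≠ x j) ∧ ∀ (i : Fin n) (j : Fin (c + 1)), x i ≠ q j}

/-- The Hessian matrix of `V(·,u)` at `x`. -/
noncomputable def hessian (n c : ℕ) (q u : Fin (c + 1) → ℝ) (x : Fin n → ℝ) :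
    Matrix (Fin n) (Fin n) ℝ :=
  fun k i => iteratedFDeriv ℝ 2 (energy n c q u) x ![Pi.single k 1, Pi.single i 1]

theorem inv_combo_lt_combo_inv {a b p r : ℝ} (hp : 0 < p) (hr : 0 < r) (hpr : p ≠ r)
    (ha : 0 < a) (hb : 0 < b) (hab : a + b = 1) :
    (a * p + b * r)⁻¹ < a * p⁻¹ + b * r⁻¹ := by
  simpa [zpow_neg_one] using
    (strictConvexOn_zpow (m := -1) (by norm_num) (by norm_num)).2 hp hr hpr ha hb hab

theorem Convex.subset_Ioi_or_subset_Iio {s : Set ℝ} (hs : Convex ℝ s) {e : ℝ} (he : e ∉ s) :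
    s ⊆ Set.Ioi e ∨ s ⊆ Set.Iio e := by
  simp only [Set.subset_def, Set.mem_Ioi, Set.mem_Iio]
  by_contra! h
  obtain ⟨⟨t₁, h₁, ht₁⟩, ⟨t₂, h₂, ht₂⟩⟩ := h
  exact he (hs.ordConnected.out h₁ h₂ ⟨ht₁, ht₂⟩)

theorem strictConvexOn_div_abs_sub {s : Set ℝ} (hs : Convex ℝ s) {e w : ℝ} (he : e ∉ s)
    (hw : 0 < w) : StrictConvexOn ℝ s fun t => w / |t - e| := by
  obtain ⟨σ, hσ, hσs⟩ : ∃ σ : ℝ, σ ≠ 0 ∧ ∀ t ∈ s, |t - e| = σ * (t - e) := by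
    rcases hs.subset_Ioi_or_subset_Iio he with hs' | hs'
    · exact ⟨1, one_ne_zero, fun t ht => by rw [one_mul, abs_of_pos (sub_pos.2 (hs' ht))]⟩
    · exact ⟨-1, by norm_num, fun t ht => by
        rw [neg_one_mul, abs_of_neg (sub_neg.2 (hs' ht))]⟩
  have hpos : ∀ t ∈ s, 0 < |t - e| := fun t ht =>
    abs_pos.2 (sub_ne_zero.2 (ne_of_mem_of_not_mem ht he))
  refine ⟨hs, fun t₁ h₁ t₂ h₂ hne a b ha hb hab => ?_⟩
  have hdist : |a • t₁ + b • t₂ - e| = a * |t₁ - e| + b * |t₂ - e| := by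
    rw [hσs _ (hs h₁ h₂ ha.le hb.le hab), hσs t₁ h₁, hσs t₂ h₂, smul_eq_mul, smul_eq_mul]
    linear_combination σ * e * hab
  have hne' : |t₁ - e| ≠ |t₂ - e| := by
    rw [hσs t₁ h₁, hσs t₂ h₂]
    exact fun h => hne (by simpa using mul_left_cancel₀ hσ h)
  calc w / |a • t₁ + b • t₂ - e| = w * (a * |t₁ - e| + b * |t₂ - e|)⁻¹ := by
        rw [hdist, div_eq_mul_inv]
    _ < w * (a * |t₁ - e|⁻¹ + b * |t₂ - e|⁻¹) :=
        mul_lt_mul_of_pos_left (inv_combo_lt_combo_inv (hpos t₁ h₁) (hpos t₂ h₂) hne' ha hb hab) hw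
    _ = a • (w / |t₁ - e|) + b • (w / |t₂ - e|) := by simp only [smul_eq_mul]; ring

section Sums

variable {ι E : Type*} [AddCommMonoid E] [Module ℝ E] {s : Set E}

theorem ConvexOn.fun_sum {t : Finset ι} {f : ι → E → ℝ} (hs : Convex ℝ s)
    (hf : ∀ i ∈ t, ConvexOn ℝ s (f i)) : ConvexOn ℝ s fun x => ∑ i ∈ t, f i x := by
  refine ⟨hs, fun x hx y hy a b ha hb hab => ?_⟩
  calc ∑ i ∈ t, f i (a • x + b • y) ≤ ∑ i ∈ t, (a • f i x + b • f i y) :=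
        sum_le_sum fun i hi => (hf i hi).2 hx hy ha hb hab
    _ = a • ∑ i ∈ t, f i x + b • ∑ i ∈ t, f i y := by rw [sum_add_distrib, smul_sum, smul_sum]

theorem StrictConvexOn.fun_sum {t : Finset ι} (ht : t.Nonempty) {f : ι → E → ℝ}
    (hf : ∀ i ∈ t, StrictConvexOn ℝ s (f i)) : StrictConvexOn ℝ s fun x => ∑ i ∈ t, f i x := by
  refine ⟨(hf _ ht.choose_spec).1, fun x hx y hy hxy a b ha hb hab => ?_⟩
  calc ∑ i ∈ t, f i (a • x + b • y) < ∑ i ∈ t, (a • f i x + b • f i y) :=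
        sum_lt_sum_of_nonempty ht fun i hi => (hf i hi).2 hx hy hxy ha hb hab
    _ = a • ∑ i ∈ t, f i x + b • ∑ i ∈ t, f i y := by rw [sum_add_distrib, smul_sum, smul_sum]

theorem strictConvexOn_univ_pi_sum [Fintype ι] {S : ι → Set E} {f : ι → E → ℝ}
    (hf : ∀ i, StrictConvexOn ℝ (S i) (f i)) :
    StrictConvexOn ℝ (Set.univ.pi S) fun x => ∑ i, f i (x i) := by
  refine ⟨convex_pi fun i _ => (hf i).1, fun x hx y hy hxy a b ha hb hab => ?_⟩
  obtain ⟨m, hm⟩ := Function.ne_iff.1 hxy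
  calc ∑ i, f i ((a • x + b • y) i) < ∑ i, (a • f i (x i) + b • f i (y i)) :=
        sum_lt_sum (fun i _ => (hf i).convexOn.2 (hx i trivial) (hy i trivial) ha.le hb.le hab)
          ⟨m, mem_univ m, (hf m).2 (hx m trivial) (hy m trivial) hm ha hb hab⟩
    _ = a • ∑ i, f i (x i) + b • ∑ i, f i (y i) := by rw [sum_add_distrib, smul_sum, smul_sum]

end Sums

theorem Fin.exists_sum_Iio_le_lt {c : ℕ} (ν : Fin c → ℕ) {m : ℕ} (hm : m < ∑ k, ν k) :
    ∃ k, ∑ j ∈ Iio k, ν j ≤ m ∧ m < ∑ j ∈ Iio k, ν j + ν k := by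
  induction c with
  | zero => simp at hm
  | succ c ih =>
    rw [Fin.sum_univ_castSucc] at hm
    by_cases hlt : m < ∑ k : Fin c, ν k.castSucc
    · obtain ⟨k, hk⟩ := ih (fun k => ν k.castSucc) hlt
      exact ⟨k.castSucc, by rwa [Fin.sum_Iio_castSucc]⟩
    · refine ⟨Fin.last c, ?_⟩
      rw [Fin.Iio_last_eq_map, sum_map]
      exact ⟨not_lt.1 hlt, hm⟩

theorem StrictMono.notMem_Ioo_castSucc_succ {c : ℕ} {q : Fin (c + 1) → ℝ} (hq : StrictMono q)
    (k : Fin c) (j : Fin (c + 1)) : q j ∉ Set.Ioo (q k.castSucc) (q k.succ) := by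
  rintro ⟨h₁, h₂⟩
  have h₁ := hq.lt_iff_lt.1 h₁
  have h₂ := hq.lt_iff_lt.1 h₂
  rw [Fin.lt_def, Fin.val_castSucc] at h₁
  rw [Fin.lt_def, Fin.val_succ] at h₂
  omega

theorem convexOn_one_div_abs_linearMap {E : Type*} [AddCommGroup E] [Module ℝ E] {S : Set E}
    (hS : Convex ℝ S) (L : E →ₗ[ℝ] ℝ) (hL : ∀ x ∈ S, L x ≠ 0) :
    ConvexOn ℝ S fun x => 1 / |L x| := by
  have h0 : (0 : ℝ) ∉ L '' S := fun ⟨x, hx, hx0⟩ => hL x hx hx0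
  have h := (strictConvexOn_div_abs_sub (hS.linear_image L) h0 one_pos).convexOn.comp_linearMap L
  simpa only [Function.comp_def, sub_zero] using h.subset (Set.subset_preimage_image L S) hS

theorem convex_roa (n c : ℕ) (q : Fin (c + 1) → ℝ) (ν : Fin c → ℕ) :
    Convex ℝ (roa n c q ν) := by
  have hcoord (i : Fin n) : IsLinearMap ℝ fun x : Fin n → ℝ => x i :=
    (LinearMap.proj (R := ℝ) i).isLinear
  simp only [roa, stateSpace, Set.ofPred_and, Set.ofPred_forall]
  refine ((convex_iInter fun i => convex_iInter fun j => convex_iInter fun _ => ?_).inter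
    (convex_iInter fun i => (convex_halfSpace_gt (hcoord i) _).inter
      (convex_halfSpace_lt (hcoord i) _))).inter
    (convex_iInter fun k => convex_iInter fun m => convex_iInter fun _ => convex_iInter fun _ =>
      (convex_halfSpace_gt (hcoord m) _).inter (convex_halfSpace_lt (hcoord m) _))
  convert convex_halfSpace_lt
    (LinearMap.proj (R := ℝ) (φ := fun _ : Fin n => ℝ) i - LinearMap.proj j).isLinear 0 using 3
  simp [sub_neg]

theorem stmt7_general (n c : ℕ)
    (q : Fin (c + 1) → ℝ) (hq : StrictMono q)
    (u : Fin (c + 1) → ℝ) (hu : ∀ j, 0 < u j)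
    (ν : Fin c → ℕ) (hν : ∑ k, ν k = n) :
    StrictConvexOn ℝ (roa n c q ν) (energy n c q u) := by
  have hconv := convex_roa n c q ν
  choose K hK using fun m : Fin n => Fin.exists_sum_Iio_le_lt ν (by rw [hν]; exact m.isLt)
  have hblock : roa n c q ν ⊆ Set.univ.pi fun m => Set.Ioo (q (K m).castSucc) (q (K m).succ) :=
    fun x hx m _ => hx.2 (K m) m (hK m).1 (hK m).2
  have hpair : ConvexOn ℝ (roa n c q ν) fun x => ∑ i, ∑ j ∈ univ \ {i}, 1 / |x i - x j| := by
    refine ConvexOn.fun_sum hconv fun i _ => ConvexOn.fun_sum hconv fun j hj => ?_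
    have hij : i ≠ j := by simpa [eq_comm] using hj
    exact convexOn_one_div_abs_linearMap hconv
      (LinearMap.proj (R := ℝ) (φ := fun _ : Fin n => ℝ) i - LinearMap.proj j)
      fun x hx => by simpa [sub_eq_zero] using (StrictMono.injective (f := x) hx.1.1).ne hij
  have helec : StrictConvexOn ℝ (roa n c q ν) fun x => ∑ i, ∑ j, u j / |x i - q j| :=
    (strictConvexOn_univ_pi_sum fun m => StrictConvexOn.fun_sum univ_nonempty fun j _ =>
      strictConvexOn_div_abs_sub (convex_Ioo _ _) (hq.notMem_Ioo_castSucc_succ (K m) j)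
        (hu j)).subset hblock hconv
  exact (hpair.smul (by norm_num : (0 : ℝ) ≤ 1 / 2)).add_strictConvexOn helec

/-- For a control `u` with all components strictly positive and `ν₁ + ⋯ + ν_c = n`, the
restriction of `V(·,u)` to the convex open set `𝒮(ν)` is strictly convex. -/
theorem stmt7 (n c : ℕ) (hn : 1 ≤ n) (hc : 1 ≤ c)
    (q : Fin (c + 1) → ℝ) (hq : StrictMono q)
    (u : Fin (c + 1) → ℝ) (hu : ∀ j, 0 < u j)
    (ν : Fin c → ℕ) (hν : ∑ k, ν k = n) :
    StrictConvexOn ℝ (roa n c q ν) (energy n c q u) :=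
  stmt7_general n c q hq u hu ν hν
end

section
/- Let u = (u_0,…,u_c) have all components strictly positive, let x ∈ 𝒮(ν), and fix k ∈ {1,…,n}. Then there exists exactly one y ∈ (x_k^L, x_k^U) satisfying f_k(x_1,…,x_{k−1},y,x_{k+1},…,x_n,u) = 0. -/
open Finset Filter Topology

/-- The force on particle `k`: `f_k(x,u) = -∂V/∂x_k(x,u)`, in explicit form. -/
noncomputable def force (n c : ℕ) (q u : Fin (c + 1) → ℝ) (x : Fin n → ℝ) (k : Fin n) : ℝ :=
  ∑ j ∈ Finset.univ \ {k}, Real.sign (x k - x j) / (x k - x j) ^ 2 +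
    ∑ j : Fin (c + 1), u j * Real.sign (x k - q j) / (x k - q j) ^ 2

/-- `k′`: the smallest electrode index `j` with `x m < q j`. -/
noncomputable def kPrime (n c : ℕ) (q : Fin (c + 1) → ℝ) (x : Fin n → ℝ) (m : Fin n) :
    Fin (c + 1) :=
  if h : (Finset.univ.filter fun j : Fin (c + 1) => x m < q j).Nonempty then
    (Finset.univ.filter fun j : Fin (c + 1) => x m < q j).min' h
  else Fin.last c

/-- `x_{m-1}`, with the convention `x_0 = q_0`. -/
noncomputable def xPrev (n c : ℕ) (q : Fin (c + 1) → ℝ) (x : Fin n → ℝ) (m : Fin n) : ℝ :=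
  if h : 0 < (m : ℕ) then x ⟨(m : ℕ) - 1, lt_of_le_of_lt (Nat.sub_le _ _) m.isLt⟩ else q 0

/-- `x_{m+1}`, with the convention `x_{n+1} = q_c`. -/
noncomputable def xNext (n c : ℕ) (q : Fin (c + 1) → ℝ) (x : Fin n → ℝ) (m : Fin n) : ℝ :=
  if h : (m : ℕ) + 1 < n then x ⟨(m : ℕ) + 1, h⟩ else q (Fin.last c)

/-- `x_m^L = max (x_{m-1}, q_{k′-1})`. -/
noncomputable def xLow (n c : ℕ) (q : Fin (c + 1) → ℝ) (x : Fin n → ℝ) (m : Fin n) : ℝ :=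
  max (xPrev n c q x m)
    (q ⟨((kPrime n c q x m : ℕ)) - 1,
      lt_of_le_of_lt (Nat.sub_le _ _) (kPrime n c q x m).isLt⟩)

/-- `x_m^U = min (x_{m+1}, q_{k′})`. -/
noncomputable def xUp (n c : ℕ) (q : Fin (c + 1) → ℝ) (x : Fin n → ℝ) (m : Fin n) : ℝ :=
  min (xNext n c q x m) (q (kPrime n c q x m))

/-!
With all other particles frozen, `f_k` as a function of the position `y` of particle `k` is a sum
of terms `w * sign (y - a) / (y - a) ^ 2` with positive weights `w`, one for every other particle
and every electrode. No pole `a` lies in `(x_k^L, x_k^U)`, so every term is continuous and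
strictly decreasing there; both endpoints are poles, so the sum tends to `+∞` at `x_k^L` and to
`-∞` at `x_k^U`. The intermediate value theorem and strict monotonicity give exactly one zero.
-/

open Set

section CoulombField

variable {ι : Type*} (s : Finset ι) (a w : ι → ℝ)

noncomputable def coulombField (y : ℝ) : ℝ :=
  ∑ i ∈ s, w i * Real.sign (y - a i) / (y - a i) ^ 2

lemma mul_sign_div_sq_of_lt {a w y : ℝ} (h : a < y) :
    w * Real.sign (y - a) / (y - a) ^ 2 = w / (y - a) ^ 2 := by
  rw [Real.sign_of_pos (sub_pos.2 h), mul_one]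

lemma mul_sign_div_sq_of_gt {a w y : ℝ} (h : y < a) :
    w * Real.sign (y - a) / (y - a) ^ 2 = -(w / (a - y) ^ 2) := by
  rw [Real.sign_of_neg (sub_neg.2 h), ← neg_sq (y - a), neg_sub]
  ring

variable {L U : ℝ}

lemma strictAntiOn_mul_sign_div_sq {a w : ℝ} (hw : 0 < w) (ha : a ≤ L ∨ U ≤ a) :
    StrictAntiOn (fun y => w * Real.sign (y - a) / (y - a) ^ 2) (Ioo L U) := by
  intro y₁ hy₁ y₂ hy₂ _
  rcases ha with ha | ha
  · have h₁ : 0 < y₁ - a := by linarith [hy₁.1]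
    simp only [mul_sign_div_sq_of_lt (ha.trans_lt hy₁.1), mul_sign_div_sq_of_lt (ha.trans_lt hy₂.1)]
    gcongr
  · have h₂ : 0 < a - y₂ := by linarith [hy₂.2]
    simp only [mul_sign_div_sq_of_gt (hy₁.2.trans_le ha), mul_sign_div_sq_of_gt (hy₂.2.trans_le ha)]
    gcongr

lemma continuousOn_mul_sign_div_sq {a w : ℝ} (ha : a ≤ L ∨ U ≤ a) :
    ContinuousOn (fun y => w * Real.sign (y - a) / (y - a) ^ 2) (Ioo L U) := by
  rcases ha with ha | ha
  · refine ContinuousOn.congr (f := fun y => w / (y - a) ^ 2) ?_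
      fun y hy => mul_sign_div_sq_of_lt (ha.trans_lt hy.1)
    exact continuousOn_const.div (by fun_prop) fun y hy => by nlinarith [hy.1]
  · refine ContinuousOn.congr (f := fun y => -(w / (a - y) ^ 2)) ?_
      fun y hy => mul_sign_div_sq_of_gt (hy.2.trans_le ha)
    exact (continuousOn_const.div (by fun_prop) fun y hy => by nlinarith [hy.2]).neg

lemma neg_div_sq_le_mul_sign_div_sq {a w y : ℝ} (hw : 0 ≤ w) (ha : a ≤ L ∨ U ≤ a)
    (hy : y ∈ Ioo L U) : -(w / (U - y) ^ 2) ≤ w * Real.sign (y - a) / (y - a) ^ 2 := by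
  rcases ha with ha | ha
  · rw [mul_sign_div_sq_of_lt (ha.trans_lt hy.1)]
    have : 0 ≤ w / (U - y) ^ 2 := by positivity
    have : 0 ≤ w / (y - a) ^ 2 := by positivity
    linarith
  · rw [mul_sign_div_sq_of_gt (hy.2.trans_le ha), neg_le_neg_iff]
    have : 0 < U - y := sub_pos.2 hy.2
    gcongr

variable {s a w}

lemma strictAntiOn_coulombField (hw : ∀ i ∈ s, 0 < w i) (ha : ∀ i ∈ s, a i ≤ L ∨ U ≤ a i)
    (hs : s.Nonempty) : StrictAntiOn (coulombField s a w) (Ioo L U) :=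
  fun _ hy₁ _ hy₂ h => Finset.sum_lt_sum_of_nonempty hs fun i hi =>
    strictAntiOn_mul_sign_div_sq (hw i hi) (ha i hi) hy₁ hy₂ h

lemma continuousOn_coulombField (ha : ∀ i ∈ s, a i ≤ L ∨ U ≤ a i) :
    ContinuousOn (coulombField s a w) (Ioo L U) :=
  continuousOn_finsetSum s fun i hi => continuousOn_mul_sign_div_sq (ha i hi)

lemma coulombField_neg (y : ℝ) : coulombField s (-a) w (-y) = -coulombField s a w y := by
  simp only [coulombField, ← Finset.sum_neg_distrib, Pi.neg_apply]
  refine Finset.sum_congr rfl fun i _ => ?_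
  rw [show -y - -a i = -(y - a i) by ring, Real.sign_neg, neg_sq]
  ring

lemma tendsto_coulombField_nhdsGT (hw : ∀ i ∈ s, 0 < w i) (ha : ∀ i ∈ s, a i ≤ L ∨ U ≤ a i)
    (hLU : L < U) (hL : ∃ i ∈ s, a i = L) : Tendsto (coulombField s a w) (𝓝[>] L) atTop := by
  classical
  obtain ⟨i₀, hi₀, rfl⟩ := hL
  set W := ∑ i ∈ s.erase i₀, w i
  have hbound : ∀ y ∈ Ioo (a i₀) U,
      w i₀ / (y - a i₀) ^ 2 + -(W / (U - y) ^ 2) ≤ coulombField s a w y := by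
    intro y hy
    rw [coulombField, ← Finset.add_sum_erase s _ hi₀, mul_sign_div_sq_of_lt hy.1, Finset.sum_div,
      ← Finset.sum_neg_distrib]
    gcongr with i hi
    exact neg_div_sq_le_mul_sign_div_sq (hw i (Finset.mem_of_mem_erase hi)).le
      (ha i (Finset.mem_of_mem_erase hi)) hy
  have hsq : Tendsto (fun y => (y - a i₀) ^ 2) (𝓝[>] a i₀) (𝓝[>] 0) := by
    refine tendsto_nhdsWithin_iff.2 ⟨?_, ?_⟩
    · exact ((continuous_id.sub continuous_const).pow 2).tendsto' _ _ (by simp)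
        |>.mono_left nhdsWithin_le_nhds
    · filter_upwards [self_mem_nhdsWithin] with y (hy : a i₀ < y)
      exact pow_pos (sub_pos.2 hy) 2
  have hpole : Tendsto (fun y => w i₀ / (y - a i₀) ^ 2) (𝓝[>] a i₀) atTop := by
    simpa only [div_eq_mul_inv, Pi.inv_apply] using
      hsq.inv_tendsto_nhdsGT_zero.const_mul_atTop (hw i₀ hi₀)
  have hrest :
      Tendsto (fun y => -(W / (U - y) ^ 2)) (𝓝[>] a i₀) (𝓝 (-(W / (U - a i₀) ^ 2))) := by
    refine (ContinuousAt.tendsto ?_).mono_left nhdsWithin_le_nhds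
    exact (continuousAt_const.div ((continuousAt_const.sub continuousAt_id).pow 2)
      (pow_ne_zero 2 (sub_ne_zero.2 hLU.ne'))).neg
  refine tendsto_atTop_mono' _ ?_ (hpole.atTop_add hrest)
  filter_upwards [Ioo_mem_nhdsGT hLU] using hbound

lemma tendsto_coulombField_nhdsLT (hw : ∀ i ∈ s, 0 < w i) (ha : ∀ i ∈ s, a i ≤ L ∨ U ≤ a i)
    (hLU : L < U) (hU : ∃ i ∈ s, a i = U) : Tendsto (coulombField s a w) (𝓝[<] U) atBot := by
  have ha' : ∀ i ∈ s, (-a) i ≤ -U ∨ -L ≤ (-a) i := fun i hi => by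
    rcases ha i hi with h | h
    exacts [Or.inr (neg_le_neg h), Or.inl (neg_le_neg h)]
  have hU' : ∃ i ∈ s, (-a) i = -U := by
    obtain ⟨i, hi, rfl⟩ := hU
    exact ⟨i, hi, rfl⟩
  have h := tendsto_coulombField_nhdsGT hw ha' (neg_lt_neg hLU) hU'
  simpa [Function.comp_def, coulombField_neg] using
    tendsto_neg_atTop_atBot.comp (h.comp tendsto_neg_nhdsLT)

theorem existsUnique_coulombField_eq_zero (hw : ∀ i ∈ s, 0 < w i)
    (ha : ∀ i ∈ s, a i ≤ L ∨ U ≤ a i) (hLU : L < U) (hL : ∃ i ∈ s, a i = L)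
    (hU : ∃ i ∈ s, a i = U) : ∃! y, y ∈ Ioo L U ∧ coulombField s a w y = 0 := by
  obtain ⟨y, hy, hy₀⟩ := isPreconnected_Ioo.intermediate_value_Iii
    (le_principal_iff.2 (Ioo_mem_nhdsLT hLU)) (le_principal_iff.2 (Ioo_mem_nhdsGT hLU))
    (continuousOn_coulombField ha) (tendsto_coulombField_nhdsLT hw ha hLU hU)
    (tendsto_coulombField_nhdsGT hw ha hLU hL) (mem_univ 0)
  have hs : s.Nonempty := by
    obtain ⟨i, hi, -⟩ := hL
    exact ⟨i, hi⟩
  exact ⟨y, ⟨hy, hy₀⟩, fun z hz =>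
    (strictAntiOn_coulombField hw ha hs).injOn hz.1 hy (hz.2.trans hy₀.symm)⟩

end CoulombField

section Particles

variable {n c : ℕ} {q : Fin (c + 1) → ℝ} {x : Fin n → ℝ}

lemma force_update_eq_coulombField (u : Fin (c + 1) → ℝ) (k : Fin n) (y : ℝ) :
    force n c q u (Function.update x k y) k =
      coulombField ((Finset.univ \ {k}).disjSum Finset.univ) (Sum.elim x q) (Sum.elim 1 u) y := by
  rw [force, coulombField, Finset.sum_disjSum]
  congr 1
  · refine Finset.sum_congr rfl fun j hj => ?_
    have hjk : j ≠ k := by simpa using hj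
    simp [Function.update_of_ne hjk]
  · simp

lemma lt_q_kPrime {m : Fin n} (h : x m < q (Fin.last c)) : x m < q (kPrime n c q x m) := by
  have hne : (Finset.univ.filter fun j => x m < q j).Nonempty := ⟨Fin.last c, by simpa using h⟩
  rw [kPrime, dif_pos hne]
  simpa using Finset.min'_mem _ hne

lemma q_le_of_lt_kPrime {m : Fin n} {j : Fin (c + 1)} (hj : j < kPrime n c q x m) :
    q j ≤ x m := by
  by_contra! h
  have hne : (Finset.univ.filter fun j => x m < q j).Nonempty := ⟨j, by simpa using h⟩
  rw [kPrime, dif_pos hne] at hj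
  exact hj.not_ge (Finset.min'_le _ _ (by simpa using h))

lemma q_le_xLow_or_xUp_le_q (hq : Monotone q) (k : Fin n) (j : Fin (c + 1)) :
    q j ≤ xLow n c q x k ∨ xUp n c q x k ≤ q j := by
  rcases lt_or_ge j (kPrime n c q x k) with hj | hj
  · exact Or.inl (le_max_of_le_right (hq (Fin.le_def.2 (by simp; omega))))
  · exact Or.inr (min_le_of_right_le (hq hj))

lemma exists_eq_xLow (k : Fin n) : ∃ i ∈ (Finset.univ \ {k}).disjSum Finset.univ,
    Sum.elim x q i = xLow n c q x k := by
  rcases max_choice (xPrev n c q x k) (q ⟨(kPrime n c q x k : ℕ) - 1, by omega⟩) with h | h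
  · rw [xLow, h, xPrev]
    split_ifs with hk
    · exact ⟨Sum.inl _, by simp [Fin.ext_iff]; omega, rfl⟩
    · exact ⟨Sum.inr 0, by simp, rfl⟩
  · exact ⟨Sum.inr _, by simp, by rw [xLow, h]; rfl⟩

lemma exists_eq_xUp (k : Fin n) : ∃ i ∈ (Finset.univ \ {k}).disjSum Finset.univ,
    Sum.elim x q i = xUp n c q x k := by
  rcases min_choice (xNext n c q x k) (q (kPrime n c q x k)) with h | h
  · rw [xUp, h, xNext]
    split_ifs with hk
    · exact ⟨Sum.inl _, by simp [Fin.ext_iff], rfl⟩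
    · exact ⟨Sum.inr (Fin.last c), by simp, rfl⟩
  · exact ⟨Sum.inr _, by simp, by rw [xUp, h]; rfl⟩

lemma strictMono_of_mem_stateSpace (hx : x ∈ stateSpace n c q) : StrictMono x :=
  fun _ _ h => hx.1 _ _ h

variable (hx : x ∈ stateSpace n c q) (k : Fin n)
include hx

lemma xLow_le : xLow n c q x k ≤ x k := by
  refine max_le ?_ ?_
  · rw [xPrev]
    split_ifs with hk
    · exact (hx.1 _ _ (Fin.mk_lt_of_lt_val (by omega))).le
    · exact (hx.2 k).1.le
  · set K := kPrime n c q x k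
    rcases Nat.eq_zero_or_pos (K : ℕ) with hK | hK
    · exact (hx.2 k).1.le.trans_eq' (congrArg q (Fin.ext (by simp; omega)))
    · exact q_le_of_lt_kPrime (Fin.mk_lt_of_lt_val (by omega))

lemma lt_xUp : x k < xUp n c q x k := by
  refine lt_min ?_ (lt_q_kPrime (hx.2 k).2)
  rw [xNext]
  split_ifs with hk
  · exact hx.1 _ _ (Fin.lt_def.2 (by simp))
  · exact (hx.2 k).2

lemma le_xLow_of_lt {j : Fin n} (hj : j < k) : x j ≤ xLow n c q x k := by
  have hk : 0 < (k : ℕ) := by omega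
  refine le_max_of_le_left ?_
  rw [xPrev, dif_pos hk]
  exact (strictMono_of_mem_stateSpace hx).monotone (Fin.le_def.2 (by simp; omega))

lemma xUp_le_of_lt {j : Fin n} (hj : k < j) : xUp n c q x k ≤ x j := by
  have hk : (k : ℕ) + 1 < n := by omega
  refine min_le_of_left_le ?_
  rw [xNext, dif_pos hk]
  exact (strictMono_of_mem_stateSpace hx).monotone (Fin.le_def.2 (by simp; omega))

end Particles

theorem stmt10_general (n c : ℕ)
    (q : Fin (c + 1) → ℝ) (hq : StrictMono q)
    (u : Fin (c + 1) → ℝ) (hu : ∀ j, 0 < u j)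
    (ν : Fin c → ℕ)
    (x : Fin n → ℝ) (hx : x ∈ roa n c q ν) (k : Fin n) :
    ∃! y : ℝ, y ∈ Set.Ioo (xLow n c q x k) (xUp n c q x k) ∧
      force n c q u (Function.update x k y) k = 0 := by
  obtain ⟨hx₀, -⟩ := hx
  simp_rw [force_update_eq_coulombField]
  refine existsUnique_coulombField_eq_zero ?_ ?_ ((xLow_le hx₀ k).trans_lt (lt_xUp hx₀ k))
    (exists_eq_xLow k) (exists_eq_xUp k)
  · rintro (j | j) -
    exacts [one_pos, hu j]
  · rintro (j | j) hj
    · rcases lt_or_gt_of_ne (show j ≠ k by simpa using hj) with h | h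
      exacts [Or.inl (le_xLow_of_lt hx₀ k h), Or.inr (xUp_le_of_lt hx₀ k h)]
    · exact q_le_xLow_or_xUp_le_q hq.monotone k j

/-- For `x ∈ 𝒮(ν)` and a fixed particle `k`, there is exactly one `y ∈ (x_k^L, x_k^U)`
with `f_k(x₁,…,x_{k−1},y,x_{k+1},…,xₙ,u) = 0`. -/
theorem stmt10 (n c : ℕ) (hn : 1 ≤ n) (hc : 1 ≤ c)
    (q : Fin (c + 1) → ℝ) (hq : StrictMono q)
    (u : Fin (c + 1) → ℝ) (hu : ∀ j, 0 < u j)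
    (ν : Fin c → ℕ) (hν : ∑ k, ν k = n)
    (x : Fin n → ℝ) (hx : x ∈ roa n c q ν) (k : Fin n) :
    ∃! y : ℝ, y ∈ Set.Ioo (xLow n c q x k) (xUp n c q x k) ∧
      force n c q u (Function.update x k y) k = 0 :=
  stmt10_general n c q hq u hu ν x hx k
end

section
/- Let u = (u_0,…,u_c) have all components strictly positive and let ν ∈ ℕ₀^c satisfy ν_1 + ⋯ + ν_c = n. Define g : 𝒮(ν) → ℝ^n componentwise by letting g_k(x) be the unique y ∈ (x_k^L, x_k^U) with f_k(x_1,…,x_{k−1},y,x_{k+1},…,x_n,u) = 0. Then g maps 𝒮(ν) into 𝒮(ν), and for all x, y ∈ 𝒮(ν) with x ≠ y one has ‖g(x) − g(y)‖_∞ < ‖x − y‖_∞; in particular g has at most one fixed point in 𝒮(ν). -/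
open Finset Filter Topology

/-!
The force on particle `m` placed at `t`, the others held fixed, is a sum of terms
`coulomb (t - p)` over the other particles and (weighted by `u > 0`) the electrodes, where
`coulomb t = sign t / t²` decreases on each half-line. Hence the force decreases when the particle
moves to the right relative to every other charge without crossing any of them.

Contraction: if `g x m - g y m ≥ ‖x - y‖`, then particle `m` sits, relative to every other particle,
at least as far to the right in `x` as in `y`, and strictly further relative to the electrodes, so
its two forces, both zero, would be strictly ordered. Order preservation: particles in different
cells are separated by an electrode; for `i < j` in one cell, `g x j ≤ g x i` would force the
field on particle `i` at `g x j` to be both `≥ 0` and `< 0`.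
-/

noncomputable def coulomb (t : ℝ) : ℝ := Real.sign t / t ^ 2

lemma coulomb_pos {t : ℝ} (ht : 0 < t) : 0 < coulomb t := by
  rw [coulomb, Real.sign_of_pos ht]
  exact div_pos one_pos (sq_pos_of_pos ht)

lemma coulomb_neg {t : ℝ} (ht : t < 0) : coulomb t < 0 := by
  rw [coulomb, Real.sign_of_neg ht]
  exact div_neg_of_neg_of_pos (by norm_num) (sq_pos_of_neg ht)

lemma coulomb_strictAntiOn_Ioi : StrictAntiOn coulomb (Set.Ioi 0) := by
  intro s (hs : 0 < s) t (ht : 0 < t) hst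
  rw [coulomb, coulomb, Real.sign_of_pos hs, Real.sign_of_pos ht]
  gcongr

lemma coulomb_strictAntiOn_Iio : StrictAntiOn coulomb (Set.Iio 0) := by
  intro s (hs : s < 0) t (ht : t < 0) hst
  rw [coulomb, coulomb, Real.sign_of_neg hs, Real.sign_of_neg ht, neg_div, neg_div, neg_lt_neg_iff]
  exact one_div_lt_one_div_of_lt (sq_pos_of_neg ht) (by nlinarith)

lemma coulomb_lt_coulomb {s t : ℝ} (hst : s < t) (h : 0 < s ∨ t < 0) :
    coulomb t < coulomb s := by
  rcases h with hs | ht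
  · exact coulomb_strictAntiOn_Ioi hs (hs.trans hst) hst
  · exact coulomb_strictAntiOn_Iio (hst.trans ht) ht hst

lemma coulomb_le_coulomb {s t : ℝ} (hst : s ≤ t) (h : 0 < s ∨ t < 0) :
    coulomb t ≤ coulomb s := by
  rcases hst.eq_or_lt with rfl | hst
  · exact le_rfl
  · exact (coulomb_lt_coulomb hst h).le

section Blocks

variable {c : ℕ} (ν : Fin c → ℕ)

def InBlock (k : Fin c) (m : ℕ) : Prop :=
  ∑ j ∈ Iio k, ν j ≤ m ∧ m < ∑ j ∈ Iio k, ν j + ν k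

lemma sum_castLE_eq_sum_Iio (k : Fin c) :
    ∑ i : Fin k, ν (Fin.castLE k.2.le i) = ∑ j ∈ Iio k, ν j :=
  sum_bij (fun i _ => Fin.castLE k.2.le i) (fun i _ => by simp [Fin.lt_def])
    (fun _ _ _ _ h => Fin.castLE_injective _ h)
    (fun j hj => ⟨⟨j, (mem_Iio.mp hj : j < k)⟩, mem_univ _, rfl⟩) (fun _ _ => rfl)

lemma exists_inBlock {m : ℕ} (hm : m < ∑ k, ν k) : ∃ k, InBlock ν k m := by
  set p := finSigmaFinEquiv.symm (⟨m, hm⟩ : Fin (∑ k, ν k))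
  have hp : m = ∑ j ∈ Iio p.1, ν j + p.2 := by
    simpa [p, sum_castLE_eq_sum_Iio] using finSigmaFinEquiv_apply p
  exact ⟨p.1, by omega, by omega⟩

lemma InBlock.le_of_le {k₁ k₂ : Fin c} {m₁ m₂ : ℕ} (hm : m₁ ≤ m₂)
    (h₁ : InBlock ν k₁ m₁) (h₂ : InBlock ν k₂ m₂) : k₁ ≤ k₂ := by
  by_contra! hk
  have : ∑ j ∈ Iic k₂, ν j ≤ ∑ j ∈ Iio k₁, ν j :=
    sum_le_sum_of_subset fun j hj => mem_Iio.mpr ((mem_Iic.mp hj).trans_lt hk)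
  rw [← sum_Iio_add_eq_sum_Iic] at this
  exact absurd h₂.2 (by unfold InBlock at h₁; omega)

lemma exists_inBlock_of_sum_eq {n : ℕ} (hν : ∑ k, ν k = n) (m : Fin n) : ∃ k, InBlock ν k m :=
  exists_inBlock ν (hν ▸ m.isLt)

end Blocks

section Cells

variable {n c : ℕ} {q : Fin (c + 1) → ℝ} {x : Fin n → ℝ}

lemma kPrime_eq_succ (hq : StrictMono q) {m : Fin n} {K : Fin c}
    (h : x m ∈ Set.Ioo (q K.castSucc) (q K.succ)) : kPrime n c q x m = K.succ := by
  have hmem : K.succ ∈ univ.filter fun j => x m < q j := by simpa using h.2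
  rw [kPrime, dif_pos ⟨_, hmem⟩]
  refine le_antisymm (min'_le _ _ hmem) (le_min' _ _ _ fun j hj => ?_)
  rw [← Fin.castSucc_lt_iff_succ_le, ← hq.lt_iff_lt]
  exact h.1.trans (mem_filter.mp hj).2

lemma le_xPrev (hx : x ∈ stateSpace n c q) {j m : Fin n} (hjm : j < m) :
    x j ≤ xPrev n c q x m := by
  rw [xPrev, dif_pos (by omega)]
  rcases (show j ≤ ⟨m - 1, by omega⟩ from Fin.le_def.mpr (by simp; omega)).eq_or_lt with h | h
  · rw [h]
  · exact (hx.1 _ _ h).le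

lemma xNext_le (hx : x ∈ stateSpace n c q) {j m : Fin n} (hmj : m < j) :
    xNext n c q x m ≤ x j := by
  rw [xNext, dif_pos (by omega)]
  rcases (show (⟨m + 1, by omega⟩ : Fin n) ≤ j from Fin.le_def.mpr (by simp; omega)).eq_or_lt
    with h | h
  · rw [h]
  · exact (hx.1 _ _ h).le

lemma bounds_of_mem_Ioo_xLow_xUp (hq : StrictMono q) {ν : Fin c → ℕ} (hx : x ∈ roa n c q ν)
    {m : Fin n} {K : Fin c} (hK : InBlock ν K m) {a : ℝ}
    (ha : a ∈ Set.Ioo (xLow n c q x m) (xUp n c q x m)) :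
    (∀ j < m, x j < a) ∧ (∀ j, m < j → a < x j) ∧ a ∈ Set.Ioo (q K.castSucc) (q K.succ) := by
  have hk := kPrime_eq_succ hq (hx.2 K m hK.1 hK.2)
  have hlow : xPrev n c q x m < a ∧ q K.castSucc < a := by
    have := ha.1
    simp only [xLow, hk, max_lt_iff, Fin.val_succ, add_tsub_cancel_right] at this
    exact this
  have hup : a < xNext n c q x m ∧ a < q K.succ := by
    simpa [xUp, hk] using ha.2
  exact ⟨fun j hj => (le_xPrev hx.1 hj).trans_lt hlow.1,
    fun j hj => hup.1.trans_le (xNext_le hx.1 hj), hlow.2, hup.2⟩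

lemma lt_or_lt_of_mem_Ioo_castSucc_succ (hq : Monotone q) {K : Fin c} {a b : ℝ}
    (ha : a ∈ Set.Ioo (q K.castSucc) (q K.succ)) (hb : b ∈ Set.Ioo (q K.castSucc) (q K.succ))
    (j : Fin (c + 1)) : q j < b ∨ a < q j := by
  rcases le_or_gt j K.castSucc with h | h
  · exact .inl ((hq h).trans_lt hb.1)
  · exact .inr (ha.2.trans_le (hq (Fin.castSucc_lt_iff_succ_le.mp h)))

end Cells

section Field

variable {n c : ℕ} (q u : Fin (c + 1) → ℝ)

noncomputable def particleField (x : Fin n → ℝ) (m : Fin n) (t : ℝ) : ℝ :=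
  ∑ j ∈ univ \ {m}, coulomb (t - x j) + ∑ j, u j * coulomb (t - q j)

lemma force_update_self (x : Fin n → ℝ) (m : Fin n) (t : ℝ) :
    force n c q u (Function.update x m t) m = particleField q u x m t := by
  rw [force, particleField, Function.update_self]
  congr 1
  · refine sum_congr rfl fun j hj => ?_
    rw [Function.update_of_ne (by simpa using hj), coulomb]
  · simp only [coulomb, mul_div_assoc]

lemma particleField_add_coulomb (x : Fin n → ℝ) (m : Fin n) (t : ℝ) :
    particleField q u x m t + coulomb (t - x m) =
      ∑ j, coulomb (t - x j) + ∑ j, u j * coulomb (t - q j) := by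
  rw [particleField, add_right_comm, sdiff_singleton_eq_erase, add_comm (∑ j ∈ _, _),
    add_sum_erase univ (fun j => coulomb (t - x j)) (mem_univ m)]

variable {q u}

lemma particleField_lt_particleField (hu : ∀ j, 0 < u j) {x y : Fin n → ℝ} {m : Fin n}
    {a b : ℝ} (hba : b < a)
    (hparticles : ∀ j ≠ m, b - y j ≤ a - x j ∧ (y j < b ∨ a < x j))
    (helectrodes : ∀ j, q j < b ∨ a < q j) :
    particleField q u x m a < particleField q u y m b := by
  refine add_lt_add_of_le_of_lt (sum_le_sum fun j hj => ?_)
    (sum_lt_sum_of_nonempty univ_nonempty fun j _ => ?_)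
  · obtain ⟨hle, hside⟩ := hparticles j (by simpa using hj)
    exact coulomb_le_coulomb hle (hside.imp sub_pos.mpr sub_neg.mpr)
  · refine mul_lt_mul_of_pos_left (coulomb_lt_coulomb (by linarith) ?_) (hu j)
    exact (helectrodes j).imp sub_pos.mpr sub_neg.mpr

end Field

section JacobiMap

variable {n c : ℕ} {q u : Fin (c + 1) → ℝ} {ν : Fin c → ℕ} {g : (Fin n → ℝ) → Fin n → ℝ}

/-- `g` performs one step of the nonlinear Jacobi iteration on `𝒮(ν)`: every particle is moved,
the others held fixed, to a zero of the force acting on it within its admissible interval. -/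
def IsJacobiMap (q u : Fin (c + 1) → ℝ) (ν : Fin c → ℕ) (g : (Fin n → ℝ) → Fin n → ℝ) : Prop :=
  ∀ x ∈ roa n c q ν, ∀ k : Fin n,
    g x k ∈ Set.Ioo (xLow n c q x k) (xUp n c q x k) ∧
      force n c q u (Function.update x k (g x k)) k = 0

lemma IsJacobiMap.particleField_eq_zero (hg : IsJacobiMap q u ν g) {x : Fin n → ℝ}
    (hx : x ∈ roa n c q ν) (m : Fin n) : particleField q u x m (g x m) = 0 := by
  rw [← force_update_self]
  exact (hg x hx m).2

lemma IsJacobiMap.bounds (hq : StrictMono q) (hg : IsJacobiMap q u ν g) {x : Fin n → ℝ}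
    (hx : x ∈ roa n c q ν) {m : Fin n} {K : Fin c} (hK : InBlock ν K m) :
    (∀ j < m, x j < g x m) ∧ (∀ j, m < j → g x m < x j) ∧
      g x m ∈ Set.Ioo (q K.castSucc) (q K.succ) :=
  bounds_of_mem_Ioo_xLow_xUp hq hx hK (hg x hx m).1

lemma IsJacobiMap.strictMono (hq : StrictMono q) (hu : ∀ j, 0 < u j) (hν : ∑ k, ν k = n)
    (hg : IsJacobiMap q u ν g) {x : Fin n → ℝ} (hx : x ∈ roa n c q ν) : StrictMono (g x) := by
  intro i j hij
  obtain ⟨K, hK⟩ := exists_inBlock_of_sum_eq ν hν i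
  obtain ⟨L, hL⟩ := exists_inBlock_of_sum_eq ν hν j
  obtain ⟨-, hi₂, hcell_i⟩ := hg.bounds hq hx hK
  obtain ⟨hj₁, -, hcell_j⟩ := hg.bounds hq hx hL
  rcases (hK.le_of_le ν hij.le hL).lt_or_eq with hKL | rfl
  · calc g x i < q K.succ := hcell_i.2
      _ ≤ q L.castSucc := hq.monotone (Fin.succ_le_castSucc_iff.mpr hKL)
      _ < g x j := hcell_j.1
  by_contra! hji
  -- At `b = g x j ≤ g x i` the field on particle `i` is `≥ 0`, as it decreases along the cell;
  -- but it differs from the vanishing field on particle `j` at `b` by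
  -- `coulomb (b - x j) - coulomb (b - x i) < 0`.
  have hfield : particleField q u x i (g x i) ≤ particleField q u x i (g x j) := by
    rcases hji.eq_or_lt with h | h
    · rw [h]
    · refine (particleField_lt_particleField hu h (fun k hk => ⟨by linarith, ?_⟩)
        (lt_or_lt_of_mem_Ioo_castSucc_succ hq.monotone hcell_i hcell_j)).le
      exact (lt_or_gt_of_ne hk).imp (fun hki => hj₁ k (hki.trans hij)) (hi₂ k)
  have hpos := coulomb_pos (sub_pos.mpr (hj₁ i hij))
  have hneg := coulomb_neg (sub_neg.mpr (hji.trans_lt (hi₂ j hij)))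
  have hsum := (particleField_add_coulomb q u x i (g x j)).trans
    (particleField_add_coulomb q u x j (g x j)).symm
  rw [hg.particleField_eq_zero hx] at hfield hsum
  linarith

lemma IsJacobiMap.mapsTo (hq : StrictMono q) (hu : ∀ j, 0 < u j) (hν : ∑ k, ν k = n)
    (hg : IsJacobiMap q u ν g) : Set.MapsTo g (roa n c q ν) (roa n c q ν) := by
  intro x hx
  refine ⟨⟨fun i j hij => hg.strictMono hq hu hν hx hij, fun m => ?_⟩,
    fun K m h₁ h₂ => (hg.bounds hq hx ⟨h₁, h₂⟩).2.2⟩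
  obtain ⟨K, hK⟩ := exists_inBlock_of_sum_eq ν hν m
  obtain ⟨h₁, h₂⟩ := (hg.bounds hq hx hK).2.2
  exact ⟨(hq.monotone (Fin.zero_le _)).trans_lt h₁, h₂.trans_le (hq.monotone (Fin.le_last _))⟩

lemma IsJacobiMap.apply_sub_apply_lt (hq : StrictMono q) (hu : ∀ j, 0 < u j)
    (hν : ∑ k, ν k = n) (hg : IsJacobiMap q u ν g) {x y : Fin n → ℝ} (hx : x ∈ roa n c q ν)
    (hy : y ∈ roa n c q ν) {d : ℝ} (hd : 0 < d) (hxy : ∀ j, x j - y j ≤ d) (m : Fin n) :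
    g x m - g y m < d := by
  obtain ⟨K, hK⟩ := exists_inBlock_of_sum_eq ν hν m
  obtain ⟨-, hx₂, hcell_x⟩ := hg.bounds hq hx hK
  obtain ⟨hy₁, -, hcell_y⟩ := hg.bounds hq hy hK
  by_contra! h
  have := particleField_lt_particleField hu (by linarith)
    (fun j hj => ⟨by linarith [hxy j], (lt_or_gt_of_ne hj).imp (hy₁ j) (hx₂ j)⟩)
    (lt_or_lt_of_mem_Ioo_castSucc_succ hq.monotone hcell_x hcell_y)
  rw [hg.particleField_eq_zero hx, hg.particleField_eq_zero hy] at this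
  exact this.false

lemma IsJacobiMap.norm_sub_lt (hq : StrictMono q) (hu : ∀ j, 0 < u j) (hν : ∑ k, ν k = n)
    (hg : IsJacobiMap q u ν g) {x y : Fin n → ℝ} (hx : x ∈ roa n c q ν)
    (hy : y ∈ roa n c q ν) (hne : x ≠ y) : ‖g x - g y‖ < ‖x - y‖ := by
  have hd : 0 < ‖x - y‖ := norm_pos_iff.mpr (sub_ne_zero.mpr hne)
  have hcoord (x y : Fin n → ℝ) (j : Fin n) : x j - y j ≤ ‖x - y‖ :=
    (le_abs_self _).trans (norm_le_pi_norm (x - y) j)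
  refine (pi_norm_lt_iff hd).mpr fun m => ?_
  rw [Pi.sub_apply, Real.norm_eq_abs, abs_sub_lt_iff]
  refine ⟨hg.apply_sub_apply_lt hq hu hν hx hy hd (hcoord x y) m,
    hg.apply_sub_apply_lt hq hu hν hy hx hd (fun j => ?_) m⟩
  rw [norm_sub_rev]
  exact hcoord y x j

end JacobiMap

theorem stmt11_general (n c : ℕ)
    (q : Fin (c + 1) → ℝ) (hq : StrictMono q)
    (u : Fin (c + 1) → ℝ) (hu : ∀ j, 0 < u j)
    (ν : Fin c → ℕ) (hν : ∑ k, ν k = n)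
    (g : (Fin n → ℝ) → Fin n → ℝ)
    (hg : ∀ x ∈ roa n c q ν, ∀ k : Fin n,
      g x k ∈ Set.Ioo (xLow n c q x k) (xUp n c q x k) ∧
      force n c q u (Function.update x k (g x k)) k = 0) :
    (∀ x ∈ roa n c q ν, g x ∈ roa n c q ν) ∧
    (∀ x ∈ roa n c q ν, ∀ y ∈ roa n c q ν, x ≠ y → ‖g x - g y‖ < ‖x - y‖) ∧
    (∀ x ∈ roa n c q ν, ∀ y ∈ roa n c q ν, g x = x → g y = y → x = y) := by
  have hg : IsJacobiMap q u ν g := hg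
  have hcontract : ∀ x ∈ roa n c q ν, ∀ y ∈ roa n c q ν, x ≠ y → ‖g x - g y‖ < ‖x - y‖ :=
    fun x hx y hy => hg.norm_sub_lt hq hu hν hx hy
  refine ⟨fun x hx => hg.mapsTo hq hu hν hx, hcontract, fun x hx y hy hgx hgy => ?_⟩
  by_contra hne
  simpa [hgx, hgy] using hcontract x hx y hy hne

/-- The map `g` defined componentwise by `g_k(x) =` the unique zero of
`y ↦ f_k(…,y,…,u)` in `(x_k^L, x_k^U)` maps `𝒮(ν)` into itself and is a contraction in the
maximum norm: `‖g(x) − g(y)‖_∞ < ‖x − y‖_∞` for `x ≠ y`; in particular it has at most one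
fixed point in `𝒮(ν)`. (The norm on `Fin n → ℝ` is the sup norm.) -/
theorem stmt11 (n c : ℕ) (hn : 1 ≤ n) (hc : 1 ≤ c)
    (q : Fin (c + 1) → ℝ) (hq : StrictMono q)
    (u : Fin (c + 1) → ℝ) (hu : ∀ j, 0 < u j)
    (ν : Fin c → ℕ) (hν : ∑ k, ν k = n)
    (g : (Fin n → ℝ) → Fin n → ℝ)
    (hg : ∀ x ∈ roa n c q ν, ∀ k : Fin n,
      g x k ∈ Set.Ioo (xLow n c q x k) (xUp n c q x k) ∧
      force n c q u (Function.update x k (g x k)) k = 0) :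
    (∀ x ∈ roa n c q ν, g x ∈ roa n c q ν) ∧
    (∀ x ∈ roa n c q ν, ∀ y ∈ roa n c q ν, x ≠ y → ‖g x - g y‖ < ‖x - y‖) ∧
    (∀ x ∈ roa n c q ν, ∀ y ∈ roa n c q ν, g x = x → g y = y → x = y) :=
  stmt11_general n c q hq u hu ν hν g hg
end
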